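/- If κ is a completely ineffable cardinal, then 𝔟_κ(∈*) = κ⁺. -/

import Mathlib

open Cardinal Set

universe u

namespace GenLoc

/-- `α` realizes its cardinal `κ = #α` as an order: every proper initial segment has
cardinality `< #α`.  Together with `[LinearOrder α] [WellFoundedLT α]` this says that
`α` is order-isomorphic to the initial ordinal of `#α`, i.e. `α` is a copy of the
cardinal `κ` with its ordinal order. -/
def IsKappaLike (α : Type u) [Preorder α] : Prop :=
  ∀ a : α, #(Set.Iio a) < #α

/-- `A` is a bounded subset of `α` (bounded in `κ`). -/
def BddSet {α : Type u} [LT α] (A : Set α) : Prop :=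
  ∃ b : α, ∀ x ∈ A, x < b

/-- The bounded ideal `J^κ_bd` on `κ`. -/
def bddIdeal (α : Type u) [LT α] : Set (Set α) :=
  { A | BddSet A }

/-- `I` is an ideal of subsets of `α` (of `κ`). -/
structure IsIdeal {α : Type u} (I : Set (Set α)) : Prop where
  empty_mem : (∅ : Set α) ∈ I
  subset_mem : ∀ A ∈ I, ∀ B : Set α, B ⊆ A → B ∈ I
  union_mem : ∀ A ∈ I, ∀ B ∈ I, A ∪ B ∈ I

/-- An `h`-slalom: a map `φ : κ → P(κ)` with `|φ α| ≤ |h α|` for every `α < κ`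
(`|h a|`, the cardinality of the ordinal `h a`, is `#(Set.Iio (h a))`). -/
def IsSlalom {α : Type u} [Preorder α] (h : α → α) (φ : α → Set α) : Prop :=
  ∀ a : α, #(φ a) ≤ #(Set.Iio (h a))

/-- `f ∈^I φ` : the set of points where `φ` fails to capture `f` is in the ideal `I`. -/
def LocIn {α : Type u} (I : Set (Set α)) (f : α → α) (φ : α → Set α) : Prop :=
  { a | f a ∉ φ a } ∈ I

/-- The localization bounding number `𝔟_h(∈^I)`. -/
noncomputable def locB {α : Type u} [Preorder α] (I : Set (Set α)) (h : α → α) :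
    Cardinal.{u} :=
  sInf { c | ∃ F : Set (α → α), #F = c ∧
    ∀ φ : α → Set α, IsSlalom h φ → ∃ f ∈ F, ¬ LocIn I f φ }

/-- The localization dominating number `𝔡_h(∈^I)`. -/
noncomputable def locD {α : Type u} [Preorder α] (I : Set (Set α)) (h : α → α) :
    Cardinal.{u} :=
  sInf { c | ∃ A : Set (α → Set α), #A = c ∧ (∀ φ ∈ A, IsSlalom h φ) ∧
    ∀ f : α → α, ∃ φ ∈ A, LocIn I f φ }

/-- `U` is an ultrafilter of subsets of `α`. -/
structure IsUltrafilterOn {α : Type u} (U : Set (Set α)) : Prop where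
  univ_mem : Set.univ ∈ U
  empty_not_mem : (∅ : Set α) ∉ U
  superset_mem : ∀ A ∈ U, ∀ B : Set α, A ⊆ B → B ∈ U
  inter_mem : ∀ A ∈ U, ∀ B ∈ U, A ∩ B ∈ U
  mem_or_compl_mem : ∀ A : Set α, A ∈ U ∨ Aᶜ ∈ U

/-- `U` is `κ`-complete: intersections of fewer than `κ` many members of `U` are in `U`. -/
def IsKappaComplete {α : Type u} (κ : Cardinal.{u}) (U : Set (Set α)) : Prop :=
  ∀ S : Set (Set α), S ⊆ U → #S < κ → ⋂₀ S ∈ U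

/-- `U` is σ-complete: closed under countable intersections. -/
def IsSigmaComplete {α : Type u} (U : Set (Set α)) : Prop :=
  ∀ f : ℕ → Set α, (∀ n, f n ∈ U) → (⋂ n, f n) ∈ U

/-- `U` is nonprincipal. -/
def IsNonprincipalOn {α : Type u} (U : Set (Set α)) : Prop :=
  ∀ a : α, ({a} : Set α) ∉ U

/-- `U` is a uniform ultrafilter: all its members have full size `#α`. -/
def IsUniform {α : Type u} (U : Set (Set α)) : Prop :=
  ∀ A ∈ U, #A = #α

/-- `κ = #α` is a measurable cardinal: it is uncountable and carries a
`κ`-complete nonprincipal ultrafilter. -/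
def IsMeasurableOn (α : Type u) : Prop :=
  ℵ₀ < #α ∧ ∃ U : Set (Set α),
    IsUltrafilterOn U ∧ IsNonprincipalOn U ∧ IsKappaComplete #α U

/-- `U` is a normal ultrafilter on `κ`: `κ`-complete, nonprincipal, and every function
which is regressive on a set in `U` is constant on a set in `U`. -/
def IsNormalUFOn {α : Type u} [LT α] (U : Set (Set α)) : Prop :=
  IsUltrafilterOn U ∧ IsNonprincipalOn U ∧ IsKappaComplete #α U ∧
    ∀ f : α → α, { a | f a < a } ∈ U → ∃ c : α, { a | f a = c } ∈ U

/-- The `ξ`-th iterated cardinal successor of `κ`, taking suprema at limit stages. -/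
noncomputable def iterSucc (κ : Cardinal.{u}) (ξ : Ordinal.{u}) : Cardinal.{u} :=
  Ordinal.limitRecOn ξ κ (fun _ ih => Order.succ ih)
    fun ξ' _ ih => ⨆ η : Set.Iio ξ', ih η.1 η.2

/-- A partial `h`-slalom with (unbounded) domain `D`. -/
def IsPartialSlalom {α : Type u} [Preorder α] (h : α → α) (D : Set α) (φ : α → Set α) :
    Prop :=
  (∀ a : α, ∃ b ∈ D, a ≤ b) ∧ ∀ a ∈ D, #(φ a) ≤ #(Set.Iio (h a))

/-- `f ∈* φ` for a partial slalom with domain `D`: the set of points of `D` where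
`φ` fails to capture `f` is bounded. -/
def PLocStar {α : Type u} [LT α] (D : Set α) (f : α → α) (φ : α → Set α) : Prop :=
  BddSet { a | a ∈ D ∧ f a ∉ φ a }

/-- The partial-slalom localization bounding number `𝔟_h(p∈*)`. -/
noncomputable def locBP {α : Type u} [Preorder α] (h : α → α) : Cardinal.{u} :=
  sInf { c | ∃ F : Set (α → α), #F = c ∧
    ∀ (D : Set α) (φ : α → Set α), IsPartialSlalom h D φ → ∃ f ∈ F, ¬ PLocStar D f φ }

/-- The partial-slalom localization dominating number `𝔡_h(p∈*)`. -/
noncomputable def locDP {α : Type u} [Preorder α] (h : α → α) : Cardinal.{u} :=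
  sInf { c | ∃ A : Set (Set α × (α → Set α)), #A = c ∧
    (∀ p ∈ A, IsPartialSlalom h p.1 p.2) ∧
    ∀ f : α → α, ∃ p ∈ A, PLocStar p.1 f p.2 }

/-- The unbounding number `𝔟_κ` (for the eventual domination order `≤*`). -/
noncomputable def bddNum (α : Type u) [Preorder α] : Cardinal.{u} :=
  sInf { c | ∃ F : Set (α → α), #F = c ∧
    ∀ g : α → α, ∃ f ∈ F, ¬ BddSet { a | ¬ f a ≤ g a } }

/-- The dominating number `𝔡_κ` (for the eventual domination order `≤*`). -/
noncomputable def domNum (α : Type u) [Preorder α] : Cardinal.{u} :=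
  sInf { c | ∃ F : Set (α → α), #F = c ∧
    ∀ g : α → α, ∃ f ∈ F, BddSet { a | ¬ g a ≤ f a } }

/-- `φ ⊆^I ψ` for slaloms. -/
def SubIn {α : Type u} (I : Set (Set α)) (φ ψ : α → Set α) : Prop :=
  { a | ¬ φ a ⊆ ψ a } ∈ I

/-- `𝔟_h(⊆^I)`: the least size of a family of `h`-slaloms with no single
`h`-slalom `⊆^I`-above all of them. -/
noncomputable def subB {α : Type u} [Preorder α] (I : Set (Set α)) (h : α → α) :
    Cardinal.{u} :=
  sInf { c | ∃ F : Set (α → Set α), #F = c ∧ (∀ φ ∈ F, IsSlalom h φ) ∧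
    ∀ ψ : α → Set α, IsSlalom h ψ → ∃ φ ∈ F, ¬ SubIn I φ ψ }

/-- `𝔡_h(⊆^I)`: the least size of a `⊆^I`-cofinal family of `h`-slaloms. -/
noncomputable def subD {α : Type u} [Preorder α] (I : Set (Set α)) (h : α → α) :
    Cardinal.{u} :=
  sInf { c | ∃ A : Set (α → Set α), #A = c ∧ (∀ φ ∈ A, IsSlalom h φ) ∧
    ∀ ψ : α → Set α, IsSlalom h ψ → ∃ φ ∈ A, SubIn I ψ φ }

/-- `C` is a closed unbounded (club) subset of `κ`. -/
def IsClubIn (α : Type u) [Preorder α] (C : Set α) : Prop :=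
  (∀ a : α, ∃ b ∈ C, a ≤ b) ∧
    ∀ a : α, (∃ b, b < a) → (∀ b, b < a → ∃ c ∈ C, b < c ∧ c < a) → a ∈ C

/-- `f ∈^cl φ` : `{α < κ : f α ∈ φ α}` contains a club. -/
def ClubLocIn {α : Type u} [Preorder α] (f : α → α) (φ : α → Set α) : Prop :=
  ∃ C : Set α, IsClubIn α C ∧ ∀ a ∈ C, f a ∈ φ a

/-- `A` is a stationary subset of `κ`: it meets every club. -/
def IsStatIn (α : Type u) [Preorder α] (A : Set α) : Prop :=
  ∀ C : Set α, IsClubIn α C → (A ∩ C).Nonempty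

/-- `R` is a stationary class: nonempty, consisting of stationary sets,
and upward closed under inclusion. -/
def IsStatClass (α : Type u) [Preorder α] (R : Set (Set α)) : Prop :=
  R.Nonempty ∧ (∀ A ∈ R, IsStatIn α A) ∧ ∀ A ∈ R, ∀ B : Set α, A ⊆ B → B ∈ R

/-- `κ = #α` is completely ineffable: there is a stationary class `R` such that every
colouring `F : [A]² → 2` of pairs from some `A ∈ R` is constant on `[B]²` for some
`B ∈ R` with `B ⊆ A`. -/
def CompletelyIneffable (α : Type u) [Preorder α] : Prop :=
  ∃ R : Set (Set α), IsStatClass α R ∧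
    ∀ A ∈ R, ∀ F : α → α → Fin 2,
      ∃ B ∈ R, B ⊆ A ∧ ∃ i : Fin 2, ∀ a ∈ B, ∀ b ∈ B, a < b → F a b = i

/-- `𝔭_κ`: the pseudo-intersection number of `κ`. -/
noncomputable def pseudoNum (α : Type u) : Cardinal.{u} :=
  sInf { c | ∃ F : Set (Set α), #F = c ∧ (∀ B ∈ F, #B = #α) ∧
    (∀ G ⊆ F, #G < #α → #(⋂₀ G) = #α) ∧
    ¬ ∃ A : Set α, #A = #α ∧ ∀ B ∈ F, #(A \ B : Set α) < #α }

/-- `𝔰_κ`: the splitting number of `κ`. -/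
noncomputable def splitNum (α : Type u) : Cardinal.{u} :=
  sInf { c | ∃ S : Set (Set α), #S = c ∧ (∀ B ∈ S, #B = #α) ∧
    ∀ A : Set α, #A = #α →
      ∃ B ∈ S, #(A ∩ B : Set α) = #α ∧ #(A \ B : Set α) = #α }

/-- `|κ^κ / I|`: the cardinality of the quotient of `κ^κ` by equality mod `I`. -/
noncomputable def quotFull {α : Type u} (I : Set (Set α)) : Cardinal.{u} :=
  #(Quot fun f g : α → α => { a | f a ≠ g a } ∈ I)

/-- `|∏_{α<κ} t(α) / I|`: the quotient of `∏_{α<κ} t(α)` by equality mod `I`. -/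
noncomputable def quotProd {α : Type u} [Preorder α] (I : Set (Set α)) (t : α → α) :
    Cardinal.{u} :=
  #(Quot fun f g : { f : α → α // ∀ a, f a < t a } => { a | f.1 a ≠ g.1 a } ∈ I)

/-- `|∏_{α<κ} h(α)⁺ / J|`: here `g < h(α)⁺` is expressed by `|g α| ≤ |h α|`. -/
noncomputable def quotProdSucc {α : Type u} [Preorder α] (J : Set (Set α)) (h : α → α) :
    Cardinal.{u} :=
  #(Quot fun f g : { f : α → α // ∀ a, #(Set.Iio (f a)) ≤ #(Set.Iio (h a)) } =>
      { a | f.1 a ≠ g.1 a } ∈ J)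

/-- `|∏_{α<κ} t(α) / U|` for an ultrafilter `U`, via equality mod `U`. -/
noncomputable def quotProdU {α : Type u} [Preorder α] (U : Set (Set α)) (t : α → α) :
    Cardinal.{u} :=
  #(Quot fun f g : { f : α → α // ∀ a, f a < t a } => { a | f.1 a = g.1 a } ∈ U)

/-- `|∏_{α<κ} h(α)⁺ / U|` for an ultrafilter `U`, via equality mod `U`. -/
noncomputable def quotProdSuccU {α : Type u} [Preorder α] (U : Set (Set α)) (h : α → α) :
    Cardinal.{u} :=
  #(Quot fun f g : { f : α → α // ∀ a, #(Set.Iio (f a)) ≤ #(Set.Iio (h a)) } =>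
      { a | f.1 a = g.1 a } ∈ U)

/-- `cf(κ^κ/U)`: the least size of a family cofinal in the ultraproduct order `<_U`. -/
noncomputable def cofUQuot {α : Type u} (U : Set (Set α)) [LT α] : Cardinal.{u} :=
  sInf { c | ∃ C : Set (α → α), #C = c ∧
    ∀ g : α → α, ∃ f ∈ C, { a | g a < f a } ∈ U }

set_option linter.unusedSectionVars false

section Basic
variable {α : Type u} [LinearOrder α] [WellFoundedLT α]

lemma mk_Iic_lt (hlike : IsKappaLike α) (hunc : ℵ₀ < #α) (a : α) : #(Iic a) < #α := by
  have h2 : #(Iic a) ≤ #(Iio a) + 1 := by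
    rw [← Set.Iio_union_right]
    exact (mk_union_le _ _).trans (by simp)
  exact h2.trans_lt
    (Cardinal.add_lt_of_lt hunc.le (hlike a) (lt_of_lt_of_le one_lt_aleph0 hunc.le))

lemma exists_gt (hlike : IsKappaLike α) (hunc : ℵ₀ < #α) (a : α) : ∃ b, a < b := by
  by_contra h
  push_neg at h
  have huniv : (univ : Set α) = Iic a := by ext x; simp [h x]
  have h1 : #α ≤ #(Iic a) := by rw [← mk_univ (α := α), huniv]
  exact absurd h1 (not_le.2 (mk_Iic_lt hlike hunc a))

lemma bdd_of_card_lt (hlike : IsKappaLike α) (hreg : (#α).IsRegular) (hunc : ℵ₀ < #α)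
    {s : Set α} (h : #s < #α) : ∃ b : α, ∀ x ∈ s, x < b := by
  by_contra hb
  push_neg at hb
  have hcov : (univ : Set α) ⊆ ⋃ x : s, Iic (x : α) := by
    intro b _
    obtain ⟨x, hx, hxb⟩ := hb b
    exact mem_iUnion.2 ⟨⟨x, hx⟩, hxb⟩
  have h1 : #α ≤ #(⋃ x : s, Iic (x : α)) := by
    rw [← mk_univ (α := α)]
    exact mk_le_mk_of_subset hcov
  have h4 : (⨆ x : s, #(Iic (x : α))) < #α :=
    iSup_lt_of_isRegular hreg h fun x => mk_Iic_lt hlike hunc _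
  have h5 : #s * (⨆ x : s, #(Iic (x : α))) < #α :=
    Cardinal.mul_lt_of_lt hreg.aleph0_le h h4
  exact absurd (h1.trans (mk_iUnion_le _)) (not_le.2 h5)

lemma unbounded_not_small (hlike : IsKappaLike α) (hreg : (#α).IsRegular) (hunc : ℵ₀ < #α)
    {s : Set α} (h : ∀ b : α, ∃ x ∈ s, b < x) : ¬ #s < #α := by
  intro hlt
  obtain ⟨b, hb⟩ := bdd_of_card_lt hlike hreg hunc hlt
  obtain ⟨x, hx, hbx⟩ := h b
  exact absurd (hb x hx) (not_lt.2 hbx.le)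

lemma isClubIn_Ioi (hlike : IsKappaLike α) (hunc : ℵ₀ < #α) (b : α) :
    IsClubIn α (Set.Ioi b) := by
  constructor
  · intro a
    obtain ⟨c, hc⟩ := exists_gt hlike hunc (max a b)
    exact ⟨c, lt_of_le_of_lt (le_max_right a b) hc, ((le_max_left a b).trans hc.le)⟩
  · rintro a ⟨c, hc⟩ hcl
    obtain ⟨e, he, _, hea⟩ := hcl c hc
    exact lt_trans he hea

lemma stat_unbounded (hlike : IsKappaLike α) (hunc : ℵ₀ < #α) {S : Set α}
    (h : IsStatIn α S) (b : α) : ∃ x ∈ S, b < x := by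
  obtain ⟨x, hxS, hxb⟩ := h (Set.Ioi b) (isClubIn_Ioi hlike hunc b)
  exact ⟨x, hxS, hxb⟩

lemma isClubIn_limits (hlike : IsKappaLike α) (hreg : (#α).IsRegular) (hunc : ℵ₀ < #α)
    {U : Set α} (hU : ∀ b : α, ∃ x ∈ U, b < x) :
    IsClubIn α {b | (∃ c, c < b) ∧ ∀ c, c < b → ∃ u ∈ U, c < u ∧ u < b} := by
  have hg : ∀ x : α, ∃ y, y ∈ U ∧ x < y := by
    intro x; obtain ⟨y, h1, h2⟩ := hU x; exact ⟨y, h1, h2⟩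
  choose g hgU hglt using hg
  constructor
  · intro a
    set u : ℕ → α := fun n => g^[n] (g a) with hu
    have humem : ∀ n, u n ∈ U := by
      intro n
      cases n with
      | zero => exact hgU a
      | succ m =>
        rw [hu]
        simp only [Function.iterate_succ_apply']
        exact hgU _
    have hmono : ∀ n, u n < u (n + 1) := by
      intro n
      have : u (n+1) = g (u n) := by rw [hu]; simp [Function.iterate_succ_apply']
      rw [this]
      exact hglt _
    have hsmall : #(range u) < #α := by
      have h1 : lift.{0} #(range u) ≤ lift.{u} #ℕ := mk_range_le_lift
      rw [mk_nat, lift_aleph0, Cardinal.lift_id'] at h1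
      exact h1.trans_lt hunc
    obtain ⟨β, hβ⟩ := bdd_of_card_lt hlike hreg hunc hsmall
    have hUbne : {x : α | ∀ n, u n < x}.Nonempty := ⟨β, fun n => hβ _ (mem_range_self n)⟩
    set b := WellFounded.min wellFounded_lt _ hUbne with hbdef
    have hbUb : ∀ n, u n < b := WellFounded.min_mem wellFounded_lt _ hUbne
    refine ⟨b, ⟨⟨u 0, hbUb 0⟩, ?_⟩, le_of_lt (lt_trans (hglt a) (hbUb 0))⟩
    intro c hc
    have hcnot : ¬ ∀ n, u n < c := by
      intro hcin
      exact WellFounded.not_lt_min wellFounded_lt {x : α | ∀ n, u n < x} hcin hc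
    push_neg at hcnot
    obtain ⟨n, hn⟩ := hcnot
    exact ⟨u (n+1), humem _, lt_of_le_of_lt hn (hmono n), hbUb (n+1)⟩
  · rintro a ⟨c0, hc0⟩ hcl
    refine ⟨⟨c0, hc0⟩, ?_⟩
    intro c hc
    obtain ⟨d, hd, hcd, hda⟩ := hcl c hc
    obtain ⟨_, hd2⟩ := hd
    obtain ⟨uu, huu, h1, h2⟩ := hd2 c hcd
    exact ⟨uu, huu, h1, h2.trans hda⟩

end Basic

section Press
variable {α : Type u} [LinearOrder α] [WellFoundedLT α]

/-- Normality: a regressive function on a set in `R` is constant on a subset in `R`. -/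
lemma regressive_const (hlike : IsKappaLike α) (hreg : (#α).IsRegular) (hunc : ℵ₀ < #α)
    {R : Set (Set α)} (hstat : ∀ A ∈ R, IsStatIn α A)
    (hpart : ∀ A ∈ R, ∀ F : α → α → Fin 2,
      ∃ B ∈ R, B ⊆ A ∧ ∃ i : Fin 2, ∀ a ∈ B, ∀ b ∈ B, a < b → F a b = i)
    {A : Set α} (hA : A ∈ R) (d : α) (g : α → α)
    (hg : ∀ x ∈ A, d < x → g x < x) :
    ∃ B ∈ R, B ⊆ A ∧ ∃ c, ∀ x ∈ B, g x = c := by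
  classical
  obtain ⟨B, hB, hBA, i, hi⟩ :=
    hpart A hA (fun x y => if g x = g y then 0 else 1)
  have hBub : ∀ b : α, ∃ x ∈ B, b < x := stat_unbounded hlike hunc (hstat B hB)
  fin_cases i
  · -- homogeneous for colour 0 : g constant on B
    obtain ⟨x₀, hx₀, _⟩ := hBub d
    refine ⟨B, hB, hBA, g x₀, ?_⟩
    intro x hx
    rcases lt_trichotomy x x₀ with h | h | h
    · have h2 := hi x hx x₀ hx₀ h
      by_contra hne
      rw [if_neg hne] at h2
      simp at h2
    · rw [h]
    · have h2 := hi x₀ hx₀ x hx h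
      by_contra hne
      rw [if_neg (Ne.symm hne)] at h2
      simp at h2
  · -- homogeneous for colour 1 : g injective on B, contradiction
    exfalso
    have hinj : ∀ x ∈ B, ∀ y ∈ B, x < y → g x ≠ g y := by
      intro x hx y hy hxy heq
      have h2 := hi x hx y hy hxy
      rw [if_pos heq] at h2
      simp at h2
    obtain ⟨B', hB', hB'B, i', hi'⟩ :=
      hpart B hB (fun x y => if g y < x then 0 else 1)
    have hB'A : B' ⊆ A := hB'B.trans hBA
    have hB'ub : ∀ b : α, ∃ x ∈ B', b < x := stat_unbounded hlike hunc (hstat B' hB')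
    fin_cases i'
    · -- g b < m eventually : too few values
      obtain ⟨m, hm, hdm⟩ := hB'ub d
      have hlt : ∀ x ∈ B', m < x → g x < m := by
        intro x hx hmx
        have h2 := hi' m hm x hx hmx
        by_contra hnot
        rw [if_neg hnot] at h2
        simp at h2
      have hmaps : ∀ x : ↥(B' ∩ Ioi m), g (x : α) ∈ Iio m := by
        rintro ⟨x, hxB', hxm⟩
        exact hlt x hxB' hxm
      have hemb : Function.Injective
          (fun x : ↥(B' ∩ Ioi m) => (⟨g (x : α), hmaps x⟩ : ↥(Iio m))) := by
        rintro ⟨x, hx⟩ ⟨y, hy⟩ hxy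
        simp only [Subtype.mk_eq_mk] at hxy
        rcases lt_trichotomy x y with h | h | h
        · exact absurd hxy (hinj x (hB'B hx.1) y (hB'B hy.1) h)
        · simpa using h
        · exact absurd hxy.symm (hinj y (hB'B hy.1) x (hB'B hx.1) h)
      have hcard : #(B' ∩ Ioi m : Set α) < #α :=
        lt_of_le_of_lt (Cardinal.mk_le_of_injective hemb) (hlike m)
      refine unbounded_not_small hlike hreg hunc ?_ hcard
      intro b
      obtain ⟨x, hx, hbx⟩ := hB'ub (max b m)
      exact ⟨x, ⟨hx, lt_of_le_of_lt (le_max_right b m) hbx⟩,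
        lt_of_le_of_lt (le_max_left b m) hbx⟩
    · -- x ≤ g b for all x < b in B' : contradiction at a limit point of B'
      have hUub : ∀ b : α, ∃ x ∈ B' ∩ Ioi d, b < x := by
        intro b
        obtain ⟨x, hx, hbx⟩ := hB'ub (max b d)
        exact ⟨x, ⟨hx, lt_of_le_of_lt (le_max_right b d) hbx⟩,
          lt_of_le_of_lt (le_max_left b d) hbx⟩
      obtain ⟨b, hbB', hbC⟩ := hstat B' hB' _ (isClubIn_limits hlike hreg hunc hUub)
      have hdb : d < b := by
        obtain ⟨c, hc⟩ := hbC.1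
        obtain ⟨v, hv, _, hvb⟩ := hbC.2 c hc
        exact lt_trans hv.2 hvb
      have hgb : g b < b := hg b (hB'A hbB') hdb
      obtain ⟨v, hvU, hgv, hvb⟩ := hbC.2 (g b) hgb
      have h2 := hi' v hvU.1 b hbB' hvb
      rw [if_pos hgv] at h2
      simp at h2

end Press

section Pairs
variable {α : Type u} [LinearOrder α] [WellFoundedLT α]

/-- The square `Iio a × Iio a` as a subset of `α × α`. -/
def cube (a : α) : Set (α × α) := {p | p.1 < a ∧ p.2 < a}

lemma cube_mono {a b : α} (h : a ≤ b) : cube a ⊆ cube b := by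
  rintro p ⟨h1, h2⟩
  exact ⟨lt_of_lt_of_le h1 h, lt_of_lt_of_le h2 h⟩

/-- A well order on `α × α` such that each `cube a` is an initial segment. -/
def plt (p q : α × α) : Prop :=
  Prod.Lex (· < ·) (Prod.Lex (· < ·) (· < ·))
    (max p.1 p.2, p.1, p.2) (max q.1 q.2, q.1, q.2)

lemma plt_iff {p q : α × α} : plt p q ↔
    max p.1 p.2 < max q.1 q.2 ∨
      (max p.1 p.2 = max q.1 q.2 ∧ (p.1 < q.1 ∨ (p.1 = q.1 ∧ p.2 < q.2))) := by
  unfold plt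
  rw [Prod.lex_def, Prod.lex_def]

lemma plt_wf : WellFounded (plt (α := α)) :=
  InvImage.wf (fun p : α × α => (max p.1 p.2, p.1, p.2))
    (WellFounded.prod_lex wellFounded_lt (WellFounded.prod_lex wellFounded_lt wellFounded_lt))

lemma plt_trichotomy {p q : α × α} (h : p ≠ q) : plt p q ∨ plt q p := by
  rcases lt_trichotomy (max p.1 p.2) (max q.1 q.2) with hm | hm | hm
  · exact Or.inl (plt_iff.2 (Or.inl hm))
  · rcases lt_trichotomy p.1 q.1 with h1 | h1 | h1
    · exact Or.inl (plt_iff.2 (Or.inr ⟨hm, Or.inl h1⟩))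
    · rcases lt_trichotomy p.2 q.2 with h2 | h2 | h2
      · exact Or.inl (plt_iff.2 (Or.inr ⟨hm, Or.inr ⟨h1, h2⟩⟩))
      · exact absurd (Prod.ext h1 h2) h
      · exact Or.inr (plt_iff.2 (Or.inr ⟨hm.symm, Or.inr ⟨h1.symm, h2⟩⟩))
    · exact Or.inr (plt_iff.2 (Or.inr ⟨hm.symm, Or.inl h1⟩))
  · exact Or.inr (plt_iff.2 (Or.inl hm))

lemma plt_trans {p q r : α × α} (h1 : plt p q) (h2 : plt q r) : plt p r := by
  rw [plt_iff] at h1 h2 ⊢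
  rcases h1 with hm | ⟨hm, h1⟩
  · rcases h2 with hm' | ⟨hm', _⟩
    · exact Or.inl (lt_trans hm hm')
    · exact Or.inl (hm'.symm ▸ hm)
  · rcases h2 with hm' | ⟨hm', h2⟩
    · exact Or.inl (hm ▸ hm')
    · refine Or.inr ⟨hm.trans hm', ?_⟩
      rcases h1 with h1 | ⟨h1a, h1b⟩
      · rcases h2 with h2 | ⟨h2a, _⟩
        · exact Or.inl (lt_trans h1 h2)
        · exact Or.inl (h2a ▸ h1)
      · rcases h2 with h2 | ⟨h2a, h2b⟩
        · exact Or.inl (h1a ▸ h2)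
        · exact Or.inr ⟨h1a.trans h2a, lt_trans h1b h2b⟩

lemma plt_mem_cube {p q : α × α} {a : α} (h : plt p q) (hq : q ∈ cube a) : p ∈ cube a := by
  have hmax : max p.1 p.2 ≤ max q.1 q.2 := by
    rcases plt_iff.1 h with hm | ⟨hm, _⟩
    · exact hm.le
    · exact hm.le
  have hq' : max q.1 q.2 < a := max_lt hq.1 hq.2
  have : max p.1 p.2 < a := lt_of_le_of_lt hmax hq'
  exact ⟨lt_of_le_of_lt (le_max_left _ _) this, lt_of_le_of_lt (le_max_right _ _) this⟩

end Pairs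

section List2
variable {α : Type u} [LinearOrder α] [WellFoundedLT α]

/-- The two-dimensional ineffability list property. -/
lemma list2 (hlike : IsKappaLike α) (hreg : (#α).IsRegular) (hunc : ℵ₀ < #α)
    {R : Set (Set α)} (hRne : R.Nonempty)
    (hstat : ∀ A ∈ R, IsStatIn α A)
    (hup : ∀ A ∈ R, ∀ B : Set α, A ⊆ B → B ∈ R)
    (hpart : ∀ A ∈ R, ∀ F : α → α → Fin 2,
      ∃ B ∈ R, B ⊆ A ∧ ∃ i : Fin 2, ∀ a ∈ B, ∀ b ∈ B, a < b → F a b = i)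
    (A : α → Set (α × α)) (hA : ∀ a, A a ⊆ cube a) :
    ∃ B ∈ R, ∀ a ∈ B, ∀ b ∈ B, a < b → A a = A b ∩ cube a := by
  classical
  obtain ⟨d₀⟩ : Nonempty α := mk_ne_zero_iff.1 (aleph0_pos.trans hunc).ne'
  obtain ⟨A₀, hA₀⟩ := hRne
  have huniv : (univ : Set α) ∈ R := hup A₀ hA₀ univ (subset_univ _)
  obtain ⟨B₁, hB₁, -, i₁, hi₁⟩ :=
    hpart univ huniv (fun a b => if A a = A b ∩ cube a then 0 else 1)
  by_cases h0 : i₁ = 0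
  · refine ⟨B₁, hB₁, ?_⟩
    intro a ha b hb hab
    have h2 := hi₁ a ha b hb hab
    rw [h0] at h2
    by_contra hne
    rw [if_neg hne] at h2
    simp at h2
  -- every pair is incoherent on B₁
  have hdiff : ∀ a ∈ B₁, ∀ b ∈ B₁, a < b → A a ≠ A b ∩ cube a := by
    intro a ha b hb hab heq
    have h2 := hi₁ a ha b hb hab
    rw [if_pos heq] at h2
    exact h0 h2.symm
  have hDne : ∀ a ∈ B₁, ∀ b ∈ B₁, a < b →
      ∃ p : α × α, ¬(p ∈ A a ↔ p ∈ A b ∩ cube a) := by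
    intro a ha b hb hab
    by_contra hne
    push_neg at hne
    exact hdiff a ha b hb hab (Set.ext fun p => hne p)
  have hδex : ∀ a b : α, ∃ p : α × α,
      (∃ q : α × α, ¬(q ∈ A a ↔ q ∈ A b ∩ cube a)) →
        (¬(p ∈ A a ↔ p ∈ A b ∩ cube a)) ∧
          ∀ q : α × α, ¬(q ∈ A a ↔ q ∈ A b ∩ cube a) → ¬ plt q p := by
    intro a b
    by_cases h : ({p : α × α | ¬(p ∈ A a ↔ p ∈ A b ∩ cube a)}).Nonempty
    · refine ⟨WellFounded.min plt_wf _ h, fun _ => ⟨WellFounded.min_mem _ _ h, ?_⟩⟩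
      intro q hq
      exact WellFounded.not_lt_min plt_wf _ hq
    · exact ⟨(d₀, d₀), fun hn => absurd hn h⟩
  choose δ hδspec using hδex
  have hδmem : ∀ a ∈ B₁, ∀ b ∈ B₁, a < b → ¬(δ a b ∈ A a ↔ δ a b ∈ A b ∩ cube a) :=
    fun a ha b hb hab => (hδspec a b (hDne a ha b hb hab)).1
  have hδmin : ∀ a ∈ B₁, ∀ b ∈ B₁, a < b →
      ∀ q : α × α, ¬(q ∈ A a ↔ q ∈ A b ∩ cube a) → ¬ plt q (δ a b) :=
    fun a ha b hb hab => (hδspec a b (hDne a ha b hb hab)).2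
  have hδcube : ∀ a ∈ B₁, ∀ b ∈ B₁, a < b → δ a b ∈ cube a := by
    intro a ha b hb hab
    have hm := hδmem a ha b hb hab
    by_cases hmem : δ a b ∈ A a
    · exact hA a hmem
    · have h2 : δ a b ∈ A b ∩ cube a := by
        by_contra hmem2
        exact hm ⟨fun h => absurd h hmem, fun h => absurd h hmem2⟩
      exact h2.2
  obtain ⟨B₀, hB₀, hB₀B₁, i₂, hi₂⟩ :=
    hpart B₁ hB₁ (fun a b => if δ a b ∈ A a then 0 else 1)
  -- sign facts
  have hb1 : ∀ a ∈ B₀, ∀ b ∈ B₀, a < b → (δ a b ∈ A a ↔ i₂ = 0) := by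
    intro a ha b hb hab
    have h2 := hi₂ a ha b hb hab
    by_cases hm : δ a b ∈ A a
    · rw [if_pos hm] at h2
      exact ⟨fun _ => h2.symm, fun _ => hm⟩
    · rw [if_neg hm] at h2
      refine ⟨fun h => absurd h hm, fun hS => ?_⟩
      exfalso
      rw [← h2] at hS
      simp at hS
  have hb2 : ∀ a ∈ B₀, ∀ b ∈ B₀, a < b → (δ a b ∈ A b ↔ ¬ (i₂ = 0)) := by
    intro a ha b hb hab
    have hm := hδmem a (hB₀B₁ ha) b (hB₀B₁ hb) hab
    have hc := hδcube a (hB₀B₁ ha) b (hB₀B₁ hb) hab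
    have h1 := hb1 a ha b hb hab
    constructor
    · intro hmem hS
      exact hm ⟨fun _ => ⟨hmem, hc⟩, fun _ => h1.2 hS⟩
    · intro hnS
      by_contra hmem
      exact hm ⟨fun h => absurd (h1.1 h) hnS, fun h => absurd h.1 hmem⟩
  have hbelow : ∀ a ∈ B₀, ∀ b ∈ B₀, a < b →
      ∀ p ∈ cube a, plt p (δ a b) → (p ∈ A a ↔ p ∈ A b) := by
    intro a ha b hb hab p hpc hplt
    have hiff : p ∈ A a ↔ p ∈ A b ∩ cube a := by
      by_contra hpD
      exact hδmin a (hB₀B₁ ha) b (hB₀B₁ hb) hab p hpD hplt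
    exact ⟨fun h => (hiff.1 h).1, fun h => hiff.2 ⟨h, hpc⟩⟩
  have hdiffat : ∀ a ∈ B₀, ∀ b ∈ B₀, a < b → (δ a b ∈ A a ↔ ¬ δ a b ∈ A b) := by
    intro a ha b hb hab
    have h1 := hb1 a ha b hb hab
    have h2 := hb2 a ha b hb hab
    tauto
  have T2 : ∀ a ∈ B₀, ∀ b ∈ B₀, ∀ c ∈ B₀, a < b → b < c → δ a b ≠ δ b c := by
    intro a ha b hb c hc hab hbc heq
    have h1 := hb2 a ha b hb hab
    have h2 := hb1 b hb c hc hbc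
    rw [heq] at h1
    tauto
  have hDcube : ∀ (a c : α) (p : α × α), ¬(p ∈ A a ↔ p ∈ A c ∩ cube a) → p ∈ cube a := by
    intro a c p hp
    by_cases h1 : p ∈ A a
    · exact hA a h1
    · by_cases h2 : p ∈ A c ∩ cube a
      · exact h2.2
      · exact absurd ⟨fun h => absurd h h1, fun h => absurd h h2⟩ hp
  have T1a : ∀ a ∈ B₀, ∀ b ∈ B₀, ∀ c ∈ B₀, a < b → b < c →
      plt (δ b c) (δ a b) → δ a c = δ b c := by
    intro a ha b hb c hc hab hbc h
    have hac : a < c := hab.trans hbc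
    have hc2 : δ b c ∈ cube a :=
      plt_mem_cube h (hδcube a (hB₀B₁ ha) b (hB₀B₁ hb) hab)
    have hiab : δ b c ∈ A a ↔ δ b c ∈ A b := hbelow a ha b hb hab _ hc2 h
    have hibc : δ b c ∈ A b ↔ ¬ δ b c ∈ A c := hdiffat b hb c hc hbc
    have hmemD : ¬(δ b c ∈ A a ↔ δ b c ∈ A c ∩ cube a) := by
      intro hiff
      have hax : δ b c ∈ A c ↔ δ b c ∈ A c ∩ cube a :=
        ⟨fun hh => ⟨hh, hc2⟩, fun hh => hh.1⟩
      tauto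
    have hminD : ∀ p : α × α, ¬(p ∈ A a ↔ p ∈ A c ∩ cube a) → ¬ plt p (δ b c) := by
      intro p hp hplt
      have hpc : p ∈ cube a := hDcube a c p hp
      have e1 : p ∈ A a ↔ p ∈ A b := hbelow a ha b hb hab p hpc (plt_trans hplt h)
      have e2 : p ∈ A b ↔ p ∈ A c :=
        hbelow b hb c hc hbc p (cube_mono hab.le hpc) hplt
      exact hp ⟨fun hh => ⟨e2.1 (e1.1 hh), hpc⟩, fun hh => e1.2 (e2.2 hh.1)⟩
    have hmem := hδmem a (hB₀B₁ ha) c (hB₀B₁ hc) hac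
    have h1 : ¬ plt (δ b c) (δ a c) := hδmin a (hB₀B₁ ha) c (hB₀B₁ hc) hac _ hmemD
    have h2 : ¬ plt (δ a c) (δ b c) := hminD (δ a c) hmem
    rcases eq_or_ne (δ a c) (δ b c) with he | he
    · exact he
    · rcases plt_trichotomy he with hlt | hlt
      · exact absurd hlt h2
      · exact absurd hlt h1
  have T1b : ∀ a ∈ B₀, ∀ b ∈ B₀, ∀ c ∈ B₀, a < b → b < c →
      plt (δ a b) (δ b c) → δ a c = δ a b := by
    intro a ha b hb c hc hab hbc h
    have hac : a < c := hab.trans hbc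
    have hc1 : δ a b ∈ cube a := hδcube a (hB₀B₁ ha) b (hB₀B₁ hb) hab
    have h1 : δ a b ∈ A a ↔ ¬ δ a b ∈ A b := hdiffat a ha b hb hab
    have h2 : δ a b ∈ A b ↔ δ a b ∈ A c :=
      hbelow b hb c hc hbc _ (cube_mono hab.le hc1) h
    have hmemD : ¬(δ a b ∈ A a ↔ δ a b ∈ A c ∩ cube a) := by
      intro hiff
      have hax : δ a b ∈ A c ↔ δ a b ∈ A c ∩ cube a :=
        ⟨fun hh => ⟨hh, hc1⟩, fun hh => hh.1⟩
      tauto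
    have hminD : ∀ p : α × α, ¬(p ∈ A a ↔ p ∈ A c ∩ cube a) → ¬ plt p (δ a b) := by
      intro p hp hplt
      have hpc : p ∈ cube a := hDcube a c p hp
      have e1 : p ∈ A a ↔ p ∈ A b := hbelow a ha b hb hab p hpc hplt
      have e2 : p ∈ A b ↔ p ∈ A c :=
        hbelow b hb c hc hbc p (cube_mono hab.le hpc) (plt_trans hplt h)
      exact hp ⟨fun hh => ⟨e2.1 (e1.1 hh), hpc⟩, fun hh => e1.2 (e2.2 hh.1)⟩
    have hmem := hδmem a (hB₀B₁ ha) c (hB₀B₁ hc) hac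
    have hx1 : ¬ plt (δ a b) (δ a c) := hδmin a (hB₀B₁ ha) c (hB₀B₁ hc) hac _ hmemD
    have hx2 : ¬ plt (δ a c) (δ a b) := hminD (δ a c) hmem
    rcases eq_or_ne (δ a c) (δ a b) with he | he
    · exact he
    · rcases plt_trichotomy he with hlt | hlt
      · exact absurd hlt hx2
      · exact absurd hlt hx1
  -- stabilization of δ a · along B₀
  have hB₀ub : ∀ b : α, ∃ x ∈ B₀, b < x := stat_unbounded hlike hunc (hstat B₀ hB₀)
  have hstab : ∀ a : α, ∃ b₁ : α, a ∈ B₀ →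
      b₁ ∈ B₀ ∧ a < b₁ ∧ ∀ b ∈ B₀, b₁ < b → δ a b = δ a b₁ := by
    intro a
    by_cases ha : a ∈ B₀
    swap
    · exact ⟨d₀, fun h => absurd h ha⟩
    have hVne : ({p : α × α | ∃ b ∈ B₀, a < b ∧ δ a b = p}).Nonempty := by
      obtain ⟨b, hb, hab⟩ := hB₀ub a
      exact ⟨δ a b, b, hb, hab, rfl⟩
    obtain ⟨b₁, hb₁, hab₁, hδb₁⟩ := WellFounded.min_mem plt_wf _ hVne
    refine ⟨b₁, fun _ => ⟨hb₁, hab₁, ?_⟩⟩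
    intro b hb h₁b
    have hne := T2 a ha b₁ hb₁ b hb hab₁ h₁b
    have hab' : a < b := hab₁.trans h₁b
    rcases plt_trichotomy hne with h | h
    · exact T1b a ha b₁ hb₁ b hb hab₁ h₁b h
    · exfalso
      have heq := T1a a ha b₁ hb₁ b hb hab₁ h₁b h
      have hmemV : δ a b ∈ {p : α × α | ∃ b ∈ B₀, a < b ∧ δ a b = p} :=
        ⟨b, hb, hab', rfl⟩
      have hnot : ¬ plt (δ a b) (δ a b₁) := by
        rw [hδb₁]
        exact WellFounded.not_lt_min plt_wf _ hmemV
      exact hnot (by rw [heq]; exact h)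
  choose bst hbst using hstab
  -- the stable value is regressive; extract a constant value on a set in R
  have hg1 : ∀ x ∈ B₀, d₀ < x → (δ x (bst x)).1 < x := by
    intro x hx _
    exact (hδcube x (hB₀B₁ hx) (bst x) (hB₀B₁ (hbst x hx).1) (hbst x hx).2.1).1
  obtain ⟨B₁', hB₁', hB₁'B₀, c₁, hc₁⟩ :=
    regressive_const hlike hreg hunc hstat hpart hB₀ d₀ (fun x => (δ x (bst x)).1) hg1
  have hg2 : ∀ x ∈ B₁', d₀ < x → (δ x (bst x)).2 < x := by
    intro x hx _
    exact (hδcube x (hB₀B₁ (hB₁'B₀ hx)) (bst x)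
      (hB₀B₁ (hbst x (hB₁'B₀ hx)).1) (hbst x (hB₁'B₀ hx)).2.1).2
  obtain ⟨B₂, hB₂, hB₂B₁', c₂, hc₂⟩ :=
    regressive_const hlike hreg hunc hstat hpart hB₁' d₀ (fun x => (δ x (bst x)).2) hg2
  have hB₂B₀ : B₂ ⊆ B₀ := hB₂B₁'.trans hB₁'B₀
  have hδconst : ∀ x ∈ B₂, δ x (bst x) = (c₁, c₂) := by
    intro x hx
    exact Prod.ext (hc₁ x (hB₂B₁' hx)) (hc₂ x hx)
  have hB₂ub : ∀ b : α, ∃ x ∈ B₂, b < x := stat_unbounded hlike hunc (hstat B₂ hB₂)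
  exfalso
  obtain ⟨a, ha, -⟩ := hB₂ub d₀
  obtain ⟨a', ha', haa'⟩ := hB₂ub (bst a)
  obtain ⟨b, hbm, hb'⟩ := hB₂ub (bst a')
  have h1 : a < a' := (hbst a (hB₂B₀ ha)).2.1.trans haa'
  have h2 : a' < b := (hbst a' (hB₂B₀ ha')).2.1.trans hb'
  have e1 : δ a a' = (c₁, c₂) := by
    rw [(hbst a (hB₂B₀ ha)).2.2 a' (hB₂B₀ ha') haa']
    exact hδconst a ha
  have e2 : δ a' b = (c₁, c₂) := by
    rw [(hbst a' (hB₂B₀ ha')).2.2 b (hB₂B₀ hbm) hb']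
    exact hδconst a' ha'
  exact T2 a (hB₂B₀ ha) a' (hB₂B₀ ha') b (hB₂B₀ hbm) h1 h2 (e1.trans e2.symm)

end List2

section Inacc
variable {α : Type u} [LinearOrder α] [WellFoundedLT α]

/-- Complete ineffability forces `κ` to be a strong limit. -/
lemma strong_limit (hlike : IsKappaLike α) (hreg : (#α).IsRegular) (hunc : ℵ₀ < #α)
    {R : Set (Set α)} (hRne : R.Nonempty)
    (hstat : ∀ A ∈ R, IsStatIn α A)
    (hup : ∀ A ∈ R, ∀ B : Set α, A ⊆ B → B ∈ R)
    (hpart : ∀ A ∈ R, ∀ F : α → α → Fin 2,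
      ∃ B ∈ R, B ⊆ A ∧ ∃ i : Fin 2, ∀ a ∈ B, ∀ b ∈ B, a < b → F a b = i)
    (x : α) : (2 : Cardinal.{u}) ^ #(Iio x) < #α := by
  classical
  obtain ⟨A₀, hA₀⟩ := hRne
  have huniv : (univ : Set α) ∈ R := hup A₀ hA₀ univ (subset_univ _)
  refine wellFounded_lt.induction (C := fun y : α => (2 : Cardinal.{u}) ^ #(Iio y) < #α) x ?_
  intro x IH
  by_cases hxe : Nonempty ↥(Iio x)
  swap
  · have h0 : #(Iio x) = 0 := Cardinal.mk_eq_zero_iff.2 (not_nonempty_iff.1 hxe)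

    rw [h0, Cardinal.power_zero]
    exact lt_of_lt_of_le one_lt_aleph0 hunc.le
  obtain ⟨c₀⟩ := hxe
  by_contra hcon
  rw [not_lt, ← mk_set] at hcon
  obtain ⟨ι⟩ : Nonempty (α ↪ Set ↥(Iio x)) := Cardinal.le_def _ _ |>.1 hcon
  have wfs : WellFounded ((· < ·) : ↥(Iio x) → ↥(Iio x) → Prop) :=
    InvImage.wf Subtype.val wellFounded_lt
  -- distinct sets differ somewhere
  have hDne : ∀ a b : α, a ≠ b → ∃ q : ↥(Iio x), ¬(q ∈ ι a ↔ q ∈ ι b) := by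
    intro a b hab
    by_contra hq
    push_neg at hq
    exact hab (ι.injective (Set.ext fun c => hq c))
  -- least point of difference
  have hmdex : ∀ a b : α, ∃ p : ↥(Iio x),
      (∃ q : ↥(Iio x), ¬(q ∈ ι a ↔ q ∈ ι b)) →
        (¬(p ∈ ι a ↔ p ∈ ι b)) ∧ ∀ q : ↥(Iio x), ¬(q ∈ ι a ↔ q ∈ ι b) → ¬ q < p := by
    intro a b
    by_cases h : ({q : ↥(Iio x) | ¬(q ∈ ι a ↔ q ∈ ι b)}).Nonempty
    · refine ⟨WellFounded.min wfs _ h, fun _ => ⟨WellFounded.min_mem _ _ h, ?_⟩⟩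
      intro q hq
      exact WellFounded.not_lt_min wfs _ hq
    · exact ⟨c₀, fun hn => absurd hn h⟩
  choose md hmd using hmdex
  obtain ⟨B, hB, -, i, hi⟩ :=
    hpart univ huniv (fun a b => if md a b ∈ ι b then 0 else 1)
  have hBub : ∀ b : α, ∃ y ∈ B, b < y := stat_unbounded hlike hunc (hstat B hB)
  -- sign facts on increasing pairs from B
  have hsgn : ∀ a ∈ B, ∀ b ∈ B, a < b →
      ((md a b ∈ ι b) ↔ i = 0) ∧ ((md a b ∈ ι a) ↔ ¬ i = 0) := by
    intro a ha b hb hab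
    have h2 := hi a ha b hb hab
    have hd := (hmd a b (hDne a b hab.ne)).1
    by_cases hm : md a b ∈ ι b
    · rw [if_pos hm] at h2
      exact ⟨⟨fun _ => h2.symm, fun _ => hm⟩,
        ⟨fun hmem hS => hd ⟨fun _ => hm, fun _ => hmem⟩, fun _ => by tauto⟩⟩
    · rw [if_neg hm] at h2
      have hma : md a b ∈ ι a := by tauto
      have hine : ¬ i = 0 := by rw [← h2]; simp
      exact ⟨⟨fun h => absurd h hm, fun h => absurd h hine⟩,
        ⟨fun _ => hine, fun _ => hma⟩⟩
  -- next element of B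
  have hnx : ∀ a : α, ∃ y, (y ∈ B ∧ a < y) ∧ ∀ z, z ∈ B ∧ a < z → y ≤ z := by
    intro a
    have hne' : {y | y ∈ B ∧ a < y}.Nonempty := by
      obtain ⟨y, h1, h2⟩ := hBub a
      exact ⟨y, h1, h2⟩
    refine ⟨WellFounded.min wellFounded_lt _ hne', WellFounded.min_mem _ _ hne', ?_⟩
    intro z hz
    exact not_lt.1 (WellFounded.not_lt_min wellFounded_lt {y | y ∈ B ∧ a < y} hz)
  choose nxt hnxt hnxtle using hnx
  -- the key injectivity argument
  have core : ∀ b ∈ B, ∀ b' ∈ B, b < b' → md b (nxt b) = md b' (nxt b') →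
      (∀ y : ↥(Iio x), (y : α) < (md b (nxt b) : α) → (y ∈ ι b ↔ y ∈ ι b')) → False := by
    intro b hb b' hb' hbb' hdd hagree
    set δ := md b (nxt b) with hδ
    have hnb := hnxt b
    have hnb' := hnxt b'
    have hs1 := hsgn b hb (nxt b) hnb.1 hnb.2
    have hs2 := hsgn b' hb' (nxt b') hnb'.1 hnb'.2
    -- δ ∈ ι (nxt b) ↔ i = 0 ; δ ∈ ι b' ↔ ¬ i = 0
    have hδn : δ ∈ ι (nxt b) ↔ i = 0 := hs1.1
    have hδb' : δ ∈ ι b' ↔ ¬ i = 0 := by rw [hdd]; exact hs2.2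
    have hnle : nxt b ≤ b' := hnxtle b b' ⟨hb', hbb'⟩
    rcases eq_or_lt_of_le hnle with heq | hlt
    · rw [heq] at hδn
      tauto
    · -- m : least difference of ι (nxt b) and ι b'
      have hm := hmd (nxt b) b' (hDne (nxt b) b' hlt.ne)
      set m := md (nxt b) b' with hmdef
      have hs3 := hsgn (nxt b) hnb.1 b' hb' hlt
      -- m ∈ ι b' ↔ i = 0 ; m ∈ ι (nxt b) ↔ ¬ i = 0
      have hδD : ¬(δ ∈ ι (nxt b) ↔ δ ∈ ι b') := by tauto
      have hmle : m ≤ δ := by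
        have := hm.2 δ hδD
        exact not_lt.1 this
      rcases eq_or_lt_of_le hmle with heq2 | hlt2
      · -- m = δ : sign clash on ι b'
        have hthis : m ∈ ι b' ↔ i = 0 := hs3.1
        rw [heq2] at hthis
        tauto
      · -- m < δ : ι b and ι (nxt b) agree at m, ι b and ι b' agree at m
        have h1 : m ∈ ι b ↔ m ∈ ι (nxt b) := by
          by_contra hD
          exact (hmd b (nxt b) (hDne b (nxt b) hnb.2.ne)).2 m hD hlt2
        have h2 : m ∈ ι b ↔ m ∈ ι b' := hagree m hlt2
        have h3 : ¬(m ∈ ι (nxt b) ↔ m ∈ ι b') := hm.1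
        tauto
  -- count `B` through the fibres of the least-difference point
  have hsub : B ⊆ ⋃ c : ↥(Iio x), {b | b ∈ B ∧ md b (nxt b) = c} := by
    intro b hb
    exact mem_iUnion.2 ⟨md b (nxt b), hb, rfl⟩
  have hfib : ∀ c : ↥(Iio x), #({b | b ∈ B ∧ md b (nxt b) = c}) < #α := by
    intro c
    have hYequiv : #{y : ↥(Iio x) // (y : α) < (c : α)} = #(Iio (c : α)) := by
      refine Cardinal.mk_congr ⟨fun y => ⟨(y.1 : α), y.2⟩,
        fun z => ⟨⟨z.1, lt_trans z.2 c.2⟩, z.2⟩, ?_, ?_⟩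
      · rintro ⟨⟨y, hy⟩, hy2⟩; rfl
      · rintro ⟨z, hz⟩; rfl
    have hinj : Function.Injective
        (fun b : ↥{b | b ∈ B ∧ md b (nxt b) = c} =>
          ({y : {y : ↥(Iio x) // (y : α) < (c : α)} | y.1 ∈ ι b.1} :
            Set {y : ↥(Iio x) // (y : α) < (c : α)})) := by
      rintro ⟨b, hbB, hbc⟩ ⟨b', hb'B, hb'c⟩ heq
      simp only [Set.ext_iff, mem_setOf_eq] at heq
      simp only [Subtype.mk_eq_mk]
      rcases lt_trichotomy b b' with h | h | h
      · exfalso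
        refine core b hbB b' hb'B h (hbc.trans hb'c.symm) ?_
        intro y hy
        have hyc : (y : α) < (c : α) := by rw [← hbc]; exact hy
        exact heq ⟨y, hyc⟩
      · exact h
      · exfalso
        refine core b' hb'B b hbB h (hb'c.trans hbc.symm) ?_
        intro y hy
        have hyc : (y : α) < (c : α) := by rw [← hb'c]; exact hy
        exact (heq ⟨y, hyc⟩).symm
    calc #({b | b ∈ B ∧ md b (nxt b) = c})
        ≤ #(Set {y : ↥(Iio x) // (y : α) < (c : α)}) := Cardinal.mk_le_of_injective hinj
      _ = 2 ^ #{y : ↥(Iio x) // (y : α) < (c : α)} := mk_set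
      _ = 2 ^ #(Iio (c : α)) := by rw [hYequiv]
      _ < #α := IH c.1 c.2
  have hBbig : ¬ #B < #α :=
    unbounded_not_small hlike hreg hunc hBub
  apply hBbig
  calc #B ≤ #(⋃ c : ↥(Iio x), {b | b ∈ B ∧ md b (nxt b) = c}) := mk_le_mk_of_subset hsub
    _ ≤ #↥(Iio x) * ⨆ c : ↥(Iio x), #({b | b ∈ B ∧ md b (nxt b) = c}) := mk_iUnion_le _
    _ < #α := Cardinal.mul_lt_of_lt hreg.aleph0_le (hlike x)
        (iSup_lt_of_isRegular hreg (hlike x) hfib)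

end Inacc

section Kurepa
variable {α : Type u} [LinearOrder α] [WellFoundedLT α]

/-- A slim family of sets (all traces lie in small prescribed levels) has at most `κ`
members, provided `κ` is completely ineffable. -/
lemma kurepa (hlike : IsKappaLike α) (hreg : (#α).IsRegular) (hunc : ℵ₀ < #α)
    {R : Set (Set α)} (hRne : R.Nonempty)
    (hstat : ∀ A ∈ R, IsStatIn α A)
    (hup : ∀ A ∈ R, ∀ B : Set α, A ⊆ B → B ∈ R)
    (hpart : ∀ A ∈ R, ∀ F : α → α → Fin 2,
      ∃ B ∈ R, B ⊆ A ∧ ∃ i : Fin 2, ∀ a ∈ B, ∀ b ∈ B, a < b → F a b = i)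
    (v₀ : α) (Ψ : α → Set (Set α))
    (hΨcard : ∀ a : α, #(Ψ a) ≤ #(Iio a))
    (T : Set (Set α))
    (hT : ∀ X ∈ T, ∀ a : α, v₀ ≤ a → X ∩ Iio a ∈ Ψ a) :
    Cardinal.mk T ≤ #α := by
  classical
  by_cases hTne : T.Nonempty
  swap
  · rw [not_nonempty_iff_eq_empty] at hTne
    rw [hTne]
    simp
  obtain ⟨X₀, hX₀⟩ := hTne
  have hΨne : ∀ a : α, v₀ ≤ a → (Ψ a).Nonempty :=
    fun a ha => ⟨X₀ ∩ Iio a, hT X₀ hX₀ a ha⟩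
  -- surjective enumerations of the levels
  have hev : ∀ a : α, ∃ ea : α → Set α, v₀ ≤ a → ∀ s ∈ Ψ a, ∃ i, i < a ∧ ea i = s := by
    intro a
    by_cases ha : v₀ ≤ a
    · obtain ⟨w⟩ : Nonempty (↥(Ψ a) ↪ ↥(Iio a)) := Cardinal.le_def _ _ |>.1 (hΨcard a)
      obtain ⟨s₀, hs₀⟩ := hΨne a ha
      refine ⟨fun i => if h : ∃ s : ↥(Ψ a), ((w s : ↥(Iio a)) : α) = i then
        (Classical.choose h).1 else s₀, fun _ => ?_⟩
      intro s hs
      refine ⟨((w ⟨s, hs⟩ : ↥(Iio a)) : α), (w ⟨s, hs⟩).2, ?_⟩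
      have hex : ∃ s' : ↥(Ψ a), ((w s' : ↥(Iio a)) : α) = ((w ⟨s, hs⟩ : ↥(Iio a)) : α) :=
        ⟨⟨s, hs⟩, rfl⟩
      show (if h : ∃ s' : ↥(Ψ a), ((w s' : ↥(Iio a)) : α) = ((w ⟨s, hs⟩ : ↥(Iio a)) : α) then
        (Classical.choose h).1 else s₀) = s
      rw [dif_pos hex]
      have h2 : w (Classical.choose hex) = w ⟨s, hs⟩ :=
        Subtype.ext (Classical.choose_spec hex)
      rw [w.injective h2]
    · exact ⟨fun _ => ∅, fun h => absurd h ha⟩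
  choose e he using hev
  -- apply the two-dimensional list property to the coded levels
  obtain ⟨B, hB, hcoh⟩ := list2 hlike hreg hunc hRne hstat hup hpart
    (fun a => {p : α × α | p.1 < a ∧ p.2 < a ∧ p.2 ∈ e a p.1})
    (fun a p hp => ⟨hp.1, hp.2.1⟩)
  have hecoh : ∀ a ∈ B, ∀ b ∈ B, a < b → ∀ i x : α, i < a → x < a →
      (x ∈ e a i ↔ x ∈ e b i) := by
    intro a ha b hb hab i x hia hxa
    have h1 := Set.ext_iff.1 (hcoh a ha b hb hab) (i, x)
    simp only [cube, mem_setOf_eq, mem_inter_iff] at h1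
    constructor
    · intro hx
      exact (h1.1 ⟨hia, hxa, hx⟩).1.2.2
    · intro hx
      exact (h1.2 ⟨⟨hia.trans hab, hxa.trans hab, hx⟩, ⟨hia, hxa⟩⟩).2.2
  -- each member of T has an eventually constant index along a set in R
  have hidx : ∀ X ∈ T, ∃ i₀ : α, ∃ BX ∈ R, BX ⊆ B ∧
      ∀ a ∈ BX, v₀ < a → i₀ < a ∧ e a i₀ = X ∩ Iio a := by
    intro X hX
    have hex : ∀ a : α, v₀ < a → ∃ i, i < a ∧ e a i = X ∩ Iio a := by
      intro a hva
      obtain ⟨i, hi1, hi2⟩ := he a hva.le (X ∩ Iio a) (hT X hX a hva.le)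
      exact ⟨i, hi1, hi2⟩
    have hgr : ∀ a ∈ B, v₀ < a →
        (if h : ∃ i, i < a ∧ e a i = X ∩ Iio a then Classical.choose h else v₀) < a := by
      intro a _ hva
      rw [dif_pos (hex a hva)]
      exact (Classical.choose_spec (hex a hva)).1
    obtain ⟨BX, hBX, hBXB, c, hc⟩ := regressive_const hlike hreg hunc hstat hpart hB v₀
      (fun a => if h : ∃ i, i < a ∧ e a i = X ∩ Iio a then Classical.choose h else v₀) hgr
    refine ⟨c, BX, hBX, hBXB, ?_⟩
    intro a ha hva
    have hga : (if h : ∃ i, i < a ∧ e a i = X ∩ Iio a then Classical.choose h else v₀) =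
        Classical.choose (hex a hva) := dif_pos (hex a hva)
    have hca := hc a ha
    rw [hga] at hca
    rw [← hca]
    exact Classical.choose_spec (hex a hva)
  choose idx BX hBXR hBXB hBXspec using hidx
  -- the index map is injective
  have hinj : Function.Injective (fun X : ↥T => idx X.1 X.2) := by
    rintro ⟨X, hX⟩ ⟨Y, hY⟩ heq
    simp only at heq
    simp only [Subtype.mk_eq_mk]
    ext z
    obtain ⟨a, haB, hagt⟩ :=
      stat_unbounded hlike hunc (hstat _ (hBXR X hX)) (max z v₀)
    obtain ⟨b, hbB, hbgt⟩ :=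
      stat_unbounded hlike hunc (hstat _ (hBXR Y hY)) (max a v₀)
    have hva : v₀ < a := (le_max_right z v₀).trans_lt hagt
    have hvb : v₀ < b := (le_max_right a v₀).trans_lt hbgt
    have hab : a < b := (le_max_left a v₀).trans_lt hbgt
    have hza : z < a := (le_max_left z v₀).trans_lt hagt
    have h1 := hBXspec X hX a haB hva
    have h2 := hBXspec Y hY b hbB hvb
    rw [← heq] at h2
    have hco := hecoh a (hBXB X hX haB) b (hBXB Y hY hbB) hab (idx X hX) z h1.1 hza
    constructor
    · intro hz
      have hz1 : z ∈ e a (idx X hX) := by rw [h1.2]; exact ⟨hz, hza⟩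
      have hz2 : z ∈ e b (idx X hX) := hco.1 hz1
      rw [h2.2] at hz2
      exact hz2.1
    · intro hz
      have hz1 : z ∈ e b (idx X hX) := by rw [h2.2]; exact ⟨hz, hza.trans hab⟩
      have hz2 : z ∈ e a (idx X hX) := hco.2 hz1
      rw [h1.2] at hz2
      exact hz2.1
  exact Cardinal.mk_le_of_injective hinj

end Kurepa

/-- If `κ` is completely ineffable then `𝔟_κ(∈*) = κ⁺`. -/
theorem statement17 (α : Type u) [LinearOrder α] [WellFoundedLT α]
    (hlike : IsKappaLike α) (hreg : (#α).IsRegular) (hunc : ℵ₀ < #α)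
    (hci : CompletelyIneffable α) :
    locB (bddIdeal α) (id : α → α) = Order.succ #α := by
  classical
  obtain ⟨R, ⟨hRne, hstat, hup⟩, hpart⟩ := hci
  -- a coding of small subsets by ordinals
  have hcode : ∀ a : α, ∃ Ca : Set α → α,
      ∀ s t : Set α, s ⊆ Iio a → t ⊆ Iio a → Ca s = Ca t → s = t := by
    intro a
    have hlt := strong_limit hlike hreg hunc hRne hstat hup hpart a
    rw [← mk_set] at hlt
    obtain ⟨w⟩ : Nonempty (Set ↥(Iio a) ↪ α) := Cardinal.le_def _ _ |>.1 hlt.le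
    refine ⟨fun s => w {x : ↥(Iio a) | (x : α) ∈ s}, ?_⟩
    intro s t hs ht heq
    have h2 := w.injective heq
    ext x
    constructor
    · intro hx
      have hxa : x < a := hs hx
      have h3 : (⟨x, hxa⟩ : ↥(Iio a)) ∈ {x : ↥(Iio a) | (x : α) ∈ t} := by
        rw [← h2]; exact hx
      exact h3
    · intro hx
      have hxa : x < a := ht hx
      have h3 : (⟨x, hxa⟩ : ↥(Iio a)) ∈ {x : ↥(Iio a) | (x : α) ∈ s} := by
        rw [h2]; exact hx
      exact h3
  choose C hC using hcode
  -- a family of κ⁺ distinct subsets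
  have hsucc_le : Order.succ #α ≤ #(Set α) :=
    Order.succ_le_of_lt (by rw [mk_set]; exact Cardinal.cantor _)
  obtain ⟨S, hS⟩ : ∃ S : Set (Set α), #S = Order.succ #α :=
    Cardinal.le_mk_iff_exists_set.1 hsucc_le
  have hfXinj : Function.Injective (fun (X : Set α) (a : α) => C a (X ∩ Iio a)) := by
    intro X Y h
    ext z
    obtain ⟨a, hza⟩ := exists_gt hlike hunc z
    have h1 : C a (X ∩ Iio a) = C a (Y ∩ Iio a) := congrFun h a
    have h2 := hC a (X ∩ Iio a) (Y ∩ Iio a) inter_subset_right inter_subset_right h1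
    constructor
    · intro hz
      exact ((Set.ext_iff.1 h2 z).1 ⟨hz, hza⟩).1
    · intro hz
      exact ((Set.ext_iff.1 h2 z).2 ⟨hz, hza⟩).1
  -- the unlocalizable family of size κ⁺
  have hmem : Order.succ #α ∈ { c | ∃ F : Set (α → α), #F = c ∧
      ∀ φ : α → Set α, IsSlalom (id : α → α) φ → ∃ f ∈ F, ¬ LocIn (bddIdeal α) f φ } := by
    refine ⟨(fun (X : Set α) (a : α) => C a (X ∩ Iio a)) '' S,
      by rw [Cardinal.mk_image_eq hfXinj, hS], ?_⟩
    intro φ hφ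
    by_contra hno
    push_neg at hno
    have hloc : ∀ X ∈ S, ∃ v : α, ∀ a : α, v ≤ a → C a (X ∩ Iio a) ∈ φ a := by
      intro X hX
      obtain ⟨b, hb⟩ := hno (fun a => C a (X ∩ Iio a)) ⟨X, hX, rfl⟩
      refine ⟨b, fun a hba => ?_⟩
      by_contra hmem'
      exact absurd hba (not_le.2 (hb a hmem'))
    choose v hv using hloc
    -- pigeonhole : κ⁺-many members share a bound
    have hex_v₀ : ∃ v₀ : α, ¬ #({X : ↥S | v X.1 X.2 = v₀}) ≤ #α := by
      by_contra hall
      push_neg at hall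
      have hcov : (univ : Set ↥S) = ⋃ v₀ : α, {X : ↥S | v X.1 X.2 = v₀} := by
        ext X
        simp only [mem_univ, true_iff, mem_iUnion, mem_setOf_eq]
        exact ⟨v X.1 X.2, rfl⟩
      have h1 : #↥S ≤ #α * ⨆ v₀ : α, #({X : ↥S | v X.1 X.2 = v₀}) := by
        calc #↥S = #(univ : Set ↥S) := mk_univ.symm
          _ = #(⋃ v₀ : α, {X : ↥S | v X.1 X.2 = v₀}) := by rw [hcov]
          _ ≤ _ := mk_iUnion_le _
      have h2 : #α * (⨆ v₀ : α, #({X : ↥S | v X.1 X.2 = v₀})) ≤ #α * #α :=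
        mul_le_mul_right (ciSup_le' fun v₀ => hall v₀) _
      rw [mul_eq_self hreg.aleph0_le] at h2
      have h3 := h1.trans h2
      rw [hS] at h3
      exact absurd h3 (not_le.2 (Order.lt_succ _))
    obtain ⟨v₀, hv₀⟩ := hex_v₀
    -- the fibre is a slim family : contradiction with the Kurepa bound
    have hTle : #({X : Set α | ∃ hX : X ∈ S, v X hX = v₀}) ≤ #α := by
      refine kurepa hlike hreg hunc hRne hstat hup hpart v₀
        (fun a => {s : Set α | s ⊆ Iio a ∧ C a s ∈ φ a}) ?_ _ ?_
      · intro a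
        have hi : Function.Injective
            (fun s : ↥{s : Set α | s ⊆ Iio a ∧ C a s ∈ φ a} =>
              (⟨C a s.1, s.2.2⟩ : ↥(φ a))) := by
          rintro ⟨s, hs⟩ ⟨t, ht⟩ h
          simp only [Subtype.mk_eq_mk] at h ⊢
          exact hC a s t hs.1 ht.1 h
        exact (Cardinal.mk_le_of_injective hi).trans (hφ a)
      · rintro X ⟨hXS, hveq⟩ a ha
        refine ⟨inter_subset_right, ?_⟩
        exact hv X hXS a (by rw [hveq]; exact ha)
    have hfle : #({X : ↥S | v X.1 X.2 = v₀}) ≤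
        #({X : Set α | ∃ hX : X ∈ S, v X hX = v₀}) := by
      refine Cardinal.mk_le_of_injective
        (f := fun Y : ↥{X : ↥S | v X.1 X.2 = v₀} =>
          (⟨Y.1.1, Y.1.2, Y.2⟩ : ↥{X : Set α | ∃ hX : X ∈ S, v X hX = v₀})) ?_
      rintro ⟨⟨X, hX⟩, hXv⟩ ⟨⟨Y, hY⟩, hYv⟩ h
      simp only [Subtype.mk_eq_mk] at h ⊢
      exact h
    exact hv₀ (hfle.trans hTle)
  -- conclusion
  rw [locB]
  refine le_antisymm (csInf_le' hmem) (le_csInf ⟨_, hmem⟩ ?_)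
  rintro c ⟨F, hFc, hF⟩
  rw [← hFc]
  refine Order.succ_le_of_lt ?_
  by_contra hle
  push_neg at hle
  -- a small family is localized by a single diagonal slalom
  obtain ⟨f₀, hf₀, -⟩ := hF (fun _ => (∅ : Set α)) (fun a => by simp)
  obtain ⟨w⟩ : Nonempty (↥F ↪ α) := Cardinal.le_def _ _ |>.1 hle
  have hu : ∀ g ∈ F, ∃ c' : α,
      (if h : ∃ g' : ↥F, (w g' : α) = c' then (Classical.choose h).1 else f₀) = g := by
    intro g hg
    refine ⟨w ⟨g, hg⟩, ?_⟩
    have hex : ∃ g' : ↥F, (w g' : α) = (w ⟨g, hg⟩ : α) := ⟨⟨g, hg⟩, rfl⟩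
    rw [dif_pos hex]
    have h2 : w (Classical.choose hex) = w ⟨g, hg⟩ := Classical.choose_spec hex
    rw [w.injective h2]
  set u : α → (α → α) := fun c' =>
    if h : ∃ g' : ↥F, (w g' : α) = c' then (Classical.choose h).1 else f₀ with hudef
  have hslalom : IsSlalom (id : α → α) (fun a => (fun c' => u c' a) '' (Iio a)) :=
    fun a => mk_image_le
  obtain ⟨g, hgF, hgn⟩ := hF _ hslalom
  obtain ⟨c', hc'⟩ := hu g hgF
  apply hgn
  obtain ⟨b, hb⟩ := exists_gt hlike hunc c'
  refine ⟨b, ?_⟩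
  intro x hx
  by_contra hnb
  push_neg at hnb
  have hcx : c' < x := lt_of_lt_of_le hb hnb
  exact hx ⟨c', hcx, congrFun hc' x⟩


end GenLoc
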